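/- arXiv:2007.06365 — 3 statements merged into one kernel-verified Lean document; each statement's English description precedes it below -/
import Mathlib

section
/- Let m ≥ 2 and n ≥ 1 be integers and let W = (1/m)·A, where A is the (n+1)×(n+1) real matrix with A 0 j = m−1 for 0 ≤ j ≤ n−1, A 0 n = 0, and for 1 ≤ i ≤ n: A i j = 1 if j = i−1 and 0 otherwise. Then ∑_{k=0}^∞ k·(W^k)_{n,0} equals the number of lists over Fin m of length at least 1 and at most n, i.e. it equals the number of edges T_{m,n} of the complete m-ary rooted tree of height n. -/
/-!
Let `S k` be the probability that the run has not yet reached length `n` after `k` letters.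
Then `p k = S k - S (k + 1)`, and Abel summation gives `∑ k p k = ∑_{k ≥ 1} S k`: the boundary
term `N * S N` converges, and its limit is `0` because `∑ S k < ∞` while `∑ 1 / N = ∞`.

The vector `s i = m ^ (n - i)` satisfies `(1 - W) s = e₀`. Since `W` is nonnegative and has no
nonzero fixed vector, `W ^ N s` decreases to `0`, so `∑ₖ Wᵏ e₀ = s`. Summing coordinates,
`∑ₖ S k = ∑ᵢ m ^ (n - i) = 1 + m + ⋯ + mⁿ`, hence `∑ k p k = m + ⋯ + mⁿ`, which is also the
number of nonempty words of length at most `n`.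
-/

open Finset Filter Topology Asymptotics Matrix

lemma eq_zero_of_tendsto_nat_mul_of_summable {S : ℕ → ℝ} {c : ℝ} (hS : Summable S)
    (h : Tendsto (fun N : ℕ => N * S N) atTop (𝓝 c)) : c = 0 := by
  by_contra hc
  have hbig : (fun N : ℕ => (N * S N)⁻¹ * S N) =O[atTop] S := by
    simpa using ((h.inv₀ hc).isBigO_one ℝ).mul (isBigO_refl S atTop)
  have heq : (fun N : ℕ => (N * S N)⁻¹ * S N) =ᶠ[atTop] fun N : ℕ => (N : ℝ)⁻¹ := by
    filter_upwards [h.eventually_ne hc] with N hN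
    rw [mul_inv, mul_assoc, inv_mul_cancel₀ (right_ne_zero_of_mul hN), mul_one]
  exact Real.not_summable_natCast_inv (summable_of_isBigO_nat hS (heq.symm.trans_isBigO hbig))

lemma sum_range_nat_mul_sub_succ (S : ℕ → ℝ) (N : ℕ) :
    ∑ k ∈ range N, (k : ℝ) * (S k - S (k + 1)) = ∑ k ∈ range N, S (k + 1) - N * S N := by
  induction N with
  | zero => simp
  | succ N ih =>
    rw [sum_range_succ, ih, sum_range_succ]
    push_cast
    ring

lemma Antitone.hasSum_nat_mul_sub_succ {S : ℕ → ℝ} {L : ℝ} (hS : Antitone S) (h : HasSum S L) :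
    HasSum (fun k : ℕ => (k : ℝ) * (S k - S (k + 1))) (L - S 0) := by
  have hnonneg : ∀ k, 0 ≤ S k := hS.le_of_tendsto h.summable.tendsto_atTop_zero
  have htail : HasSum (fun k => S (k + 1)) (L - S 0) := by
    simpa using (hasSum_nat_add_iff' 1).2 h
  have hterm : ∀ k : ℕ, 0 ≤ (k : ℝ) * (S k - S (k + 1)) :=
    fun k => mul_nonneg k.cast_nonneg (sub_nonneg.2 (hS k.le_succ))
  have hsum : Summable fun k : ℕ => (k : ℝ) * (S k - S (k + 1)) := by
    refine summable_of_sum_range_le (c := L - S 0) hterm fun N => ?_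
    rw [sum_range_nat_mul_sub_succ]
    have := sum_le_hasSum (range N) (fun k _ => hnonneg (k + 1)) htail
    nlinarith [hnonneg N, (N.cast_nonneg : (0 : ℝ) ≤ N)]
  have hlim : Tendsto (fun N : ℕ => N * S N) atTop
      (𝓝 (L - S 0 - ∑' k : ℕ, k * (S k - S (k + 1)))) := by
    refine (htail.tendsto_sum_nat.sub hsum.hasSum.tendsto_sum_nat).congr fun N => ?_
    rw [sum_range_nat_mul_sub_succ]
    ring
  rw [sub_eq_zero.1 (eq_zero_of_tendsto_nat_mul_of_summable h.summable hlim)]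
  exact hsum.hasSum

section NonnegMatrix

variable {ι : Type*} [Fintype ι] {M : Matrix ι ι ℝ} {s : ι → ℝ}

lemma Matrix.mulVec_nonneg_of_nonneg (hM : ∀ i j, 0 ≤ M i j) {v : ι → ℝ} (hv : 0 ≤ v) :
    0 ≤ M *ᵥ v :=
  fun i => sum_nonneg fun j _ => mul_nonneg (hM i j) (hv j)

variable [DecidableEq ι]

lemma Matrix.pow_mulVec_succ (M : Matrix ι ι ℝ) (v : ι → ℝ) (N : ℕ) :
    M ^ (N + 1) *ᵥ v = M ^ N *ᵥ (M *ᵥ v) := by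
  rw [mulVec_mulVec, pow_succ]

/-- The iterates decrease to a fixed vector of `M`, which must be `0`. -/
lemma Matrix.tendsto_pow_mulVec_atTop_nhds_zero (hM : ∀ i j, 0 ≤ M i j) (hs : 0 ≤ s)
    (hMs : M *ᵥ s ≤ s) (hfix : ∀ z, M *ᵥ z = z → z = 0) :
    Tendsto (fun N => M ^ N *ᵥ s) atTop (𝓝 0) := by
  set u : ℕ → ι → ℝ := fun N => M ^ N *ᵥ s
  have hu_nonneg : ∀ N, 0 ≤ u N := fun N => mulVec_nonneg_of_nonneg (pow_apply_nonneg hM N) hs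
  have hu_anti : Antitone u := antitone_nat_of_succ_le fun N => by
    have : 0 ≤ M ^ N *ᵥ (s - M *ᵥ s) :=
      mulVec_nonneg_of_nonneg (pow_apply_nonneg hM N) (sub_nonneg.2 hMs)
    simpa [u, mulVec_sub, pow_mulVec_succ] using this
  have hlim : Tendsto u atTop (𝓝 (⨅ N, u N)) := by
    refine tendsto_pi_nhds.2 fun i => ?_
    simp only [iInf_apply]
    exact tendsto_atTop_ciInf (fun a b hab => hu_anti hab i) ⟨0, by
      rintro _ ⟨N, rfl⟩
      exact hu_nonneg N i⟩
  have hfixed : M *ᵥ (⨅ N, u N) = ⨅ N, u N := by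
    refine tendsto_nhds_unique ?_ ((tendsto_add_atTop_iff_nat 1).2 hlim)
    have := (((continuous_const (y := M)).matrix_mulVec continuous_id).tendsto _).comp hlim
    refine this.congr fun N => ?_
    simp [u, mulVec_mulVec, pow_succ']
  rwa [hfix _ hfixed] at hlim

lemma Matrix.hasSum_pow_mulVec (hM : ∀ i j, 0 ≤ M i j) (hs : 0 ≤ s) (hMs : M *ᵥ s ≤ s)
    (hfix : ∀ z, M *ᵥ z = z → z = 0) : HasSum (fun k => M ^ k *ᵥ (s - M *ᵥ s)) s := by
  have hpartial : ∀ N, ∑ k ∈ range N, M ^ k *ᵥ (s - M *ᵥ s) = s - M ^ N *ᵥ s := by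
    intro N
    simp_rw [mulVec_sub, ← pow_mulVec_succ]
    simpa using sum_range_sub' (fun k => M ^ k *ᵥ s) N
  refine Pi.hasSum.2 fun i => (hasSum_iff_tendsto_nat_of_nonneg (fun k =>
    mulVec_nonneg_of_nonneg (pow_apply_nonneg hM k) (sub_nonneg.2 hMs) i) _).2 ?_
  have := (tendsto_pi_nhds.1 (tendsto_pow_mulVec_atTop_nhds_zero hM hs hMs hfix) i).const_sub (s i)
  rw [Pi.zero_apply, sub_zero] at this
  refine this.congr fun N => ?_
  rw [← Finset.sum_apply, hpartial, Pi.sub_apply]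

end NonnegMatrix

/-- `runMatrix m n i j` is the probability that one more letter changes the length of the
trailing run of the fixed letter from `j` to `i`; reaching length `n` kills the chain. -/
noncomputable def runMatrix (m n : ℕ) : Matrix (Fin (n + 1)) (Fin (n + 1)) ℝ :=
  (1 / (m : ℝ)) • Matrix.of fun i j : Fin (n + 1) =>
    if (i : ℕ) = 0 then (if (j : ℕ) < n then (m : ℝ) - 1 else 0)
    else (if (j : ℕ) + 1 = (i : ℕ) then 1 else 0)

/-- The expected number of times the run has length `i` before it reaches length `n`. -/
def expectedVisits (m n : ℕ) (i : Fin (n + 1)) : ℝ := (m : ℝ) ^ (n - i : ℕ)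

lemma sum_expectedVisits (m n : ℕ) :
    ∑ i, expectedVisits m n i = ∑ t ∈ range (n + 1), (m : ℝ) ^ t := by
  rw [← sum_range_reflect]
  exact Fin.sum_univ_eq_sum_range (fun i => (m : ℝ) ^ (n - i)) (n + 1)

namespace runMatrix

variable {m n : ℕ}

lemma nonneg (hm : 0 < m) (i j : Fin (n + 1)) : 0 ≤ runMatrix m n i j := by
  have : (1 : ℝ) ≤ m := by exact_mod_cast hm
  simp only [runMatrix, Matrix.smul_apply, of_apply, smul_eq_mul]
  split_ifs <;> positivity

lemma mulVec_apply_zero (v : Fin (n + 1) → ℝ) :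
    (runMatrix m n *ᵥ v) 0 = (m - 1) / m * ∑ j : Fin n, v j.castSucc := by
  simp [runMatrix, mulVec, dotProduct, Fin.sum_univ_castSucc, mul_sum, div_eq_mul_inv, mul_comm]

lemma mulVec_apply_succ (v : Fin (n + 1) → ℝ) (i : Fin n) :
    (runMatrix m n *ᵥ v) i.succ = v i.castSucc / m := by
  simp [runMatrix, mulVec, dotProduct, Fin.sum_univ_castSucc, Fin.val_inj, i.isLt.ne',
    div_eq_mul_inv, mul_comm]

lemma sum_mulVec (hm : m ≠ 0) (v : Fin (n + 1) → ℝ) :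
    ∑ i, (runMatrix m n *ᵥ v) i = ∑ i, v i - v (Fin.last n) := by
  rw [Fin.sum_univ_succ, mulVec_apply_zero, Fin.sum_univ_castSucc v]
  simp only [mulVec_apply_succ, ← sum_div]
  field_simp
  ring

lemma eq_zero_of_mulVec_eq_self (hm : m ≠ 0) {z : Fin (n + 1) → ℝ}
    (hz : runMatrix m n *ᵥ z = z) : z = 0 := by
  have hlast : z (Fin.last n) = 0 := by
    have := sum_mulVec hm z
    rw [hz] at this
    linarith
  funext i
  induction i using Fin.reverseInduction with
  | last => exact hlast
  | cast i ih =>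
    have := mulVec_apply_succ (m := m) z i
    rw [hz, ih] at this
    simpa [hm] using this.symm

lemma mulVec_expectedVisits (hm : m ≠ 0) :
    runMatrix m n *ᵥ expectedVisits m n = expectedVisits m n - Pi.single 0 1 := by
  have hsucc : ∀ i : Fin n,
      (runMatrix m n *ᵥ expectedVisits m n) i.succ = expectedVisits m n i.succ := by
    intro i
    rw [mulVec_apply_succ, div_eq_iff (by exact_mod_cast hm)]
    simp only [expectedVisits, Fin.val_succ, Fin.val_castSucc, ← pow_succ]
    congr 1
    omega
  funext i
  cases i using Fin.cases with
  | zero =>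
    have h := sum_mulVec hm (expectedVisits m n)
    rw [Fin.sum_univ_succ, Fin.sum_univ_succ (expectedVisits m n)] at h
    simp only [hsucc] at h
    have hlast : expectedVisits m n (Fin.last n) = 1 := by simp [expectedVisits]
    simp only [Pi.sub_apply, Pi.single_eq_same]
    linarith
  | succ i => simp [hsucc]

theorem hasSum_nat_mul_pow_last_zero (hm : 0 < m) :
    HasSum (fun k : ℕ => (k : ℝ) * (runMatrix m n ^ k) (Fin.last n) 0)
      (∑ t ∈ Icc 1 n, (m : ℝ) ^ t) := by
  set W := runMatrix m n
  set S : ℕ → ℝ := fun k => ∑ i, (W ^ k) i 0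
  have hWs : W *ᵥ expectedVisits m n = expectedVisits m n - Pi.single 0 1 :=
    mulVec_expectedVisits hm.ne'
  have hstep : ∀ k, S (k + 1) = S k - (W ^ k) (Fin.last n) 0 := fun k => by
    have hcol : (fun i => (W ^ (k + 1)) i 0) = W *ᵥ fun i => (W ^ k) i 0 := by
      ext i
      rw [pow_succ', mul_apply]
      rfl
    simp only [S, hcol]
    exact sum_mulVec hm.ne' _
  have hS : HasSum S (∑ i, expectedVisits m n i) := by
    have hs : 0 ≤ expectedVisits m n := fun i => pow_nonneg m.cast_nonneg _
    have := Matrix.hasSum_pow_mulVec (nonneg hm) hs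
      (by rw [hWs]; exact sub_le_self _ (Pi.single_nonneg.2 zero_le_one))
      (fun z => eq_zero_of_mulVec_eq_self hm.ne')
    rw [hWs, sub_sub_cancel] at this
    simp only [mulVec_single_one] at this
    exact hasSum_sum fun i _ => Pi.hasSum.1 this i
  have hanti : Antitone S := antitone_nat_of_succ_le fun k => by
    rw [hstep]
    exact sub_le_self _ (pow_apply_nonneg (nonneg hm) k _ _)
  convert hanti.hasSum_nat_mul_sub_succ hS using 1
  · funext k
    rw [hstep, sub_sub_cancel]
  · have hS0 : S 0 = 1 := by simp [S, one_apply]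
    rw [hS0, sum_expectedVisits, range_eq_Ico, sum_eq_sum_Ico_succ_bot n.succ_pos, zero_add,
      Nat.succ_eq_add_one, Ico_add_one_right_eq_Icc, pow_zero, add_sub_cancel_left]

end runMatrix

lemma card_eq_sum_pow_of_length_mem_iff {m : ℕ} {s : Finset ℕ} {T : Finset (List (Fin m))}
    (hT : ∀ l, l ∈ T ↔ l.length ∈ s) : T.card = ∑ k ∈ s, m ^ k := by
  classical
  rw [card_eq_sum_card_fiberwise (f := List.length) (t := s) fun l hl => (hT l).1 hl]
  refine sum_congr rfl fun k hk => ?_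
  rw [← Nat.card_eq_finsetCard]
  refine (Nat.card_congr (β := List.Vector (Fin m) k) (Equiv.subtypeEquivRight fun l => ?_)).trans
    (by simp)
  rw [mem_filter, hT]
  exact ⟨And.right, fun h => ⟨h ▸ hk, h⟩⟩

theorem stmt_2_general (m n : ℕ) (hm : 2 ≤ m)
    (A W : Matrix (Fin (n + 1)) (Fin (n + 1)) ℝ)
    (hA : ∀ i j : Fin (n + 1), A i j =
      if (i : ℕ) = 0 then (if (j : ℕ) < n then (m : ℝ) - 1 else 0)
      else (if (j : ℕ) + 1 = (i : ℕ) then 1 else 0))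
    (hW : W = (1 / (m : ℝ)) • A)
    (T : Finset (List (Fin m)))
    (hT : ∀ l : List (Fin m), l ∈ T ↔ 1 ≤ l.length ∧ l.length ≤ n) :
    ∑' k : ℕ, (k : ℝ) * (W ^ k) (Fin.last n) 0 = (T.card : ℝ) := by
  have hWrun : W = runMatrix m n := hW.trans (congrArg _ (Matrix.ext hA))
  rw [hWrun, (runMatrix.hasSum_nat_mul_pow_last_zero (by omega)).tsum_eq,
    card_eq_sum_pow_of_length_mem_iff (s := Icc 1 n) fun l => (hT l).trans mem_Icc.symm]
  push_cast
  rfl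

/-- For integers `m ≥ 2`, `n ≥ 1`, with `A` the `(n+1)×(n+1)` real matrix whose first row is
`(m-1, …, m-1, 0)` and whose row `i ≥ 1` has a single `1` in column `i-1`, and `W = (1/m)·A`,
the sum `∑ₖ k·(Wᵏ)_{n,0}` equals the number of lists over `Fin m` of length at least `1`
and at most `n`, i.e. the number `T_{m,n}` of edges of the complete `m`-ary rooted tree of
height `n`. -/
theorem stmt_2 (m n : ℕ) (hm : 2 ≤ m) (hn : 1 ≤ n)
    (A W : Matrix (Fin (n + 1)) (Fin (n + 1)) ℝ)
    (hA : ∀ i j : Fin (n + 1), A i j =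
      if (i : ℕ) = 0 then (if (j : ℕ) < n then (m : ℝ) - 1 else 0)
      else (if (j : ℕ) + 1 = (i : ℕ) then 1 else 0))
    (hW : W = (1 / (m : ℝ)) • A)
    (T : Finset (List (Fin m)))
    (hT : ∀ l : List (Fin m), l ∈ T ↔ 1 ≤ l.length ∧ l.length ≤ n) :
    ∑' k : ℕ, (k : ℝ) * (W ^ k) (Fin.last n) 0 = (T.card : ℝ) :=
  stmt_2_general m n hm A W hA hW T hT
end

section
/- Let m ≥ 2 and n ≥ 1 be integers, let 1 ≤ d ≤ n, and let c be a list over Fin m of length d. Let Q_c be the set of ordered pairs (a,b) of lists over Fin m of length at most n such that the longest common prefix of a and b equals c. Then (m − 1)·|Q_c| = m^{2(n−d)+1} − 1; equivalently, |Q_c| = 2·C(m,2)·((m^{n−d} − 1)/(m − 1))² + 2·((m^{n−d+1} − 1)/(m − 1) − 1) + 1, where C(m,2) is a binomial coefficient. -/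
/-!
Writing `k = n − d`, the pairs with longest common prefix `c` are exactly the pairs
`(c ++ a, c ++ b)` whose tails have length at most `k` and empty common prefix. Among all
`N_k²` pairs of tails (`N_j = 1 + m + ⋯ + m^j` lists of length at most `j`), those with a nonempty
common prefix are the `m·N_{k-1}²` pairs `(x :: a, x :: b)`. Hence
`|Q_c| = N_k² − m·N_{k-1}² = m(m−1)N_{k-1}² + 2mN_{k-1} + 1`, and `(m−1)N_{k-1} + 1 = m^k` turns
this into `(m−1)|Q_c| = m^{2k+1} − 1`.
-/

/-- The longest common prefix of two lists. -/
def lcp {α : Type*} [DecidableEq α] : List α → List α → List α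
  | a :: as, b :: bs => if a = b then a :: lcp as bs else []
  | _, _ => []

open Finset

section Lcp

variable {α : Type*} [DecidableEq α]

theorem lcp_append (c a b : List α) : lcp (c ++ a) (c ++ b) = c ++ lcp a b := by
  induction c with
  | nil => rfl
  | cons x c ih => simp [lcp, ih]

theorem lcp_prefix_left (a b : List α) : lcp a b <+: a := by
  induction a, b using lcp.induct <;> simp_all [lcp]

theorem lcp_prefix_right (a b : List α) : lcp a b <+: b := by
  induction a, b using lcp.induct <;> simp_all [lcp]

theorem lcp_ne_nil_iff {a b : List α} :
    lcp a b ≠ [] ↔ ∃ x a' b', a = x :: a' ∧ b = x :: b' := by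
  constructor
  · induction a, b using lcp.induct <;> simp_all [lcp]
  · rintro ⟨x, a', b', rfl, rfl⟩
    simp [lcp]

theorem lcp_eq_iff {a b c : List α} :
    lcp a b = c ↔ ∃ a' b', lcp a' b' = [] ∧ a = c ++ a' ∧ b = c ++ b' := by
  constructor
  · rintro rfl
    obtain ⟨a', ha⟩ := lcp_prefix_left a b
    obtain ⟨b', hb⟩ := lcp_prefix_right a b
    refine ⟨a', b', ?_, ha.symm, hb.symm⟩
    apply List.append_cancel_left (as := lcp a b)
    rw [← lcp_append, ha, hb, List.append_nil]
  · rintro ⟨a', b', h, rfl, rfl⟩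
    rw [lcp_append, h, List.append_nil]

end Lcp

section Counting

variable (α : Type*) [Fintype α] [DecidableEq α]

def listsLengthLE : ℕ → Finset (List α)
  | 0 => {[]}
  | k + 1 => insert [] ((univ ×ˢ listsLengthLE k).image fun p => p.1 :: p.2)

variable {α}

@[simp]
theorem mem_listsLengthLE {k : ℕ} {l : List α} : l ∈ listsLengthLE α k ↔ l.length ≤ k := by
  induction k generalizing l with
  | zero => cases l <;> simp [listsLengthLE]
  | succ k ih => cases l <;> simp [listsLengthLE, ih]

variable (α)

theorem card_listsLengthLE (k : ℕ) :
    #(listsLengthLE α k) = ∑ i ∈ range (k + 1), Fintype.card α ^ i := by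
  induction k with
  | zero => simp [listsLengthLE]
  | succ k ih =>
    have hcons : Function.Injective fun p : α × List α => p.1 :: p.2 := fun p q h => by
      simpa [Prod.ext_iff] using h
    rw [listsLengthLE, card_insert_of_notMem (by simp), card_image_of_injective _ hcons,
      card_product, ih, sum_range_succ' _ (k + 1), card_univ, mul_sum]
    simp [pow_succ, mul_comm]

theorem card_filter_lcp_eq_nil_add (k : ℕ) :
    #{p ∈ listsLengthLE α k ×ˢ listsLengthLE α k | lcp p.1 p.2 = []}
        + Fintype.card α * (∑ i ∈ range k, Fintype.card α ^ i) ^ 2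
      = (∑ i ∈ range (k + 1), Fintype.card α ^ i) ^ 2 := by
  cases k with
  | zero => simp [listsLengthLE, filter_singleton, lcp]
  | succ k =>
    have hcommon : {p ∈ listsLengthLE α (k + 1) ×ˢ listsLengthLE α (k + 1) | ¬lcp p.1 p.2 = []}
        = (univ ×ˢ (listsLengthLE α k ×ˢ listsLengthLE α k)).image
            fun q : α × List α × List α => (q.1 :: q.2.1, q.1 :: q.2.2) := by
      ext ⟨a, b⟩
      simp only [mem_filter, mem_product, mem_listsLengthLE, lcp_ne_nil_iff, mem_image,
        mem_univ, true_and, Prod.exists, Prod.mk.injEq]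
      constructor
      · rintro ⟨⟨ha, hb⟩, x, a', b', rfl, rfl⟩
        exact ⟨x, a', b', ⟨by simpa using ha, by simpa using hb⟩, rfl, rfl⟩
      · rintro ⟨x, a', b', ⟨ha, hb⟩, rfl, rfl⟩
        exact ⟨⟨by simpa using ha, by simpa using hb⟩, x, a', b', rfl, rfl⟩
    have hinj : Function.Injective fun q : α × List α × List α => (q.1 :: q.2.1, q.1 :: q.2.2) :=
      fun p q h => by
        simp only [Prod.ext_iff, List.cons.injEq] at h
        exact Prod.ext h.1.1 (Prod.ext h.1.2 h.2.2)
    have hsplit := card_filter_add_card_filter_not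
      (s := listsLengthLE α (k + 1) ×ˢ listsLengthLE α (k + 1)) (fun p => lcp p.1 p.2 = [])
    rw [hcommon, card_image_of_injective _ hinj, card_product, card_product, card_univ,
      card_product] at hsplit
    rw [← card_listsLengthLE, ← card_listsLengthLE, sq, sq]
    exact hsplit

theorem card_filter_lcp_eq (c : List α) (k : ℕ) :
    #{p ∈ listsLengthLE α (c.length + k) ×ˢ listsLengthLE α (c.length + k) | lcp p.1 p.2 = c}
      = #{p ∈ listsLengthLE α k ×ˢ listsLengthLE α k | lcp p.1 p.2 = []} := by
  have happend : Function.Injective fun p : List α × List α => (c ++ p.1, c ++ p.2) :=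
    fun p q h => by simpa [Prod.ext_iff] using h
  refine (congrArg card ?_).trans (card_image_of_injective _ happend)
  ext ⟨a, b⟩
  simp only [mem_filter, mem_product, mem_listsLengthLE, mem_image, Prod.exists, Prod.mk.injEq]
  rw [lcp_eq_iff (c := c)]
  constructor
  · rintro ⟨⟨ha, hb⟩, a', b', h, rfl, rfl⟩
    exact ⟨a', b', ⟨⟨by simpa using ha, by simpa using hb⟩, h⟩, rfl, rfl⟩
  · rintro ⟨a', b', ⟨⟨ha, hb⟩, h⟩, rfl, rfl⟩
    exact ⟨⟨by simpa using ha, by simpa using hb⟩, a', b', h, rfl, rfl⟩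

end Counting

theorem stmt_8_general (m n d : ℕ) (hm : 2 ≤ m) (hdn : d ≤ n)
    (c : List (Fin m)) (hc : c.length = d)
    (L : Finset (List (Fin m))) (hL : ∀ l : List (Fin m), l ∈ L ↔ l.length ≤ n)
    (Q : Finset (List (Fin m) × List (Fin m)))
    (hQ : Q = (L ×ˢ L).filter (fun p => lcp p.1 p.2 = c)) :
    (m - 1) * Q.card = m ^ (2 * (n - d) + 1) - 1 ∧
    Q.card = 2 * Nat.choose m 2 * ((m ^ (n - d) - 1) / (m - 1)) ^ 2
      + 2 * ((m ^ (n - d + 1) - 1) / (m - 1) - 1) + 1 := by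
  set k := n - d
  rw [← Nat.geomSum_eq hm, ← Nat.geomSum_eq hm, geom_sum_succ, Nat.add_sub_cancel, pow_succ,
    mul_comm 2 k, pow_mul]
  set s := ∑ i ∈ range k, m ^ i
  have hLk : L = listsLengthLE (Fin m) (c.length + k) := by
    ext l
    rw [hL, mem_listsLengthLE]
    omega
  have hQs : #Q + m * s ^ 2 = (m * s + 1) ^ 2 := by
    have := card_filter_lcp_eq_nil_add (Fin m) k
    rwa [Fintype.card_fin, geom_sum_succ, ← card_filter_lcp_eq (Fin m) c, ← hLk, ← hQ] at this
  obtain ⟨e, rfl⟩ : ∃ e, m = e + 1 := ⟨m - 1, by omega⟩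
  have hgeom : s * e + 1 = (e + 1) ^ k := geom_sum_mul_add e k
  have hchoose : 2 * (e + 1).choose 2 = (e + 1) * e := by
    rw [Nat.choose_two_right, Nat.mul_div_cancel' (Nat.even_mul_pred_self _).two_dvd,
      Nat.add_sub_cancel]
  have hcard : #Q = (e + 1) * e * s ^ 2 + 2 * ((e + 1) * s) + 1 := by
    linarith [hQs]
  rw [hchoose, Nat.add_sub_cancel, ← hgeom]
  refine ⟨Nat.eq_sub_of_add_eq ?_, hcard⟩
  rw [hcard]
  ring

/-- For integers `m ≥ 2`, `n ≥ 1`, `1 ≤ d ≤ n` and a list `c` over `Fin m` of length `d`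
(a node of the complete `m`-ary rooted tree of height `n` at depth `d`), the set `Q_c` of
ordered pairs `(a, b)` of lists over `Fin m` of length at most `n` whose longest common prefix
equals `c` satisfies `(m − 1)·|Q_c| = m^{2(n−d)+1} − 1`; equivalently,
`|Q_c| = 2·C(m,2)·((m^{n−d} − 1)/(m − 1))² + 2·((m^{n−d+1} − 1)/(m − 1) − 1) + 1`. -/
theorem stmt_8 (m n d : ℕ) (hm : 2 ≤ m) (hn : 1 ≤ n) (hd : 1 ≤ d) (hdn : d ≤ n)
    (c : List (Fin m)) (hc : c.length = d)
    (L : Finset (List (Fin m))) (hL : ∀ l : List (Fin m), l ∈ L ↔ l.length ≤ n)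
    (Q : Finset (List (Fin m) × List (Fin m)))
    (hQ : Q = (L ×ˢ L).filter (fun p => lcp p.1 p.2 = c)) :
    (m - 1) * Q.card = m ^ (2 * (n - d) + 1) - 1 ∧
    Q.card = 2 * Nat.choose m 2 * ((m ^ (n - d) - 1) / (m - 1)) ^ 2
      + 2 * ((m ^ (n - d + 1) - 1) / (m - 1) - 1) + 1 :=
  stmt_8_general m n d hm hdn c hc L hL Q hQ
end

section
/- Let m ≥ 2 and n ≥ 1 be integers and let W = (1/m)·A, where A is the (n+1)×(n+1) real matrix with A 0 j = m−1 for 0 ≤ j ≤ n−1, A 0 n = 0, and for 1 ≤ i ≤ n: A i j = 1 if j = i−1 and 0 otherwise. Then the bottom-left entry of W·((I − W)⁻¹)² equals m·(m^n − 1)/(m − 1), i.e. (W·(I − W)⁻¹·(I − W)⁻¹)_{n,0} = m·(m^n − 1)/(m − 1). -/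
/-!
Write `M = 1 - W`. Every column of `W` except the last sums to `1` and the last one sums to `0`,
so `𝟙ᵀ M = e_nᵀ`, i.e. the last row of `M⁻¹` is all ones. Rows `i ≥ 1` of `M x = 0` say
`x_{i-1} = m x_i`, and `x_n = 𝟙ᵀ M x = 0`, so `M` is invertible. The vector `u_i = m^(n-i)` solves
`M u = e_0` (row `0` follows from the others since `𝟙ᵀ M u = u_n = 1`), so it is column `0` of `M⁻¹`.
Finally `W M⁻¹ = M⁻¹ - 1`, hence the entry is `∑ᵢ u_i - u_n = m + m² + ⋯ + mⁿ`.
-/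

open Matrix

section RunLength

variable {K : Type*} [Field K] (q : K) (n : ℕ)

lemma sum_fin_pow_sub_one_sub (N : ℕ) :
    ∑ i : Fin N, q ^ (N - 1 - i : ℕ) = ∑ k ∈ Finset.range N, q ^ k :=
  (Fin.sum_univ_eq_sum_range (fun i => q ^ (N - 1 - i)) N).trans
    (Finset.sum_range_reflect (fun k => q ^ k) N)

def runLengthMatrix : Matrix (Fin (n + 1)) (Fin (n + 1)) K := fun i j =>
  if (i : ℕ) = 0 then (if (j : ℕ) < n then q - 1 else 0)
  else (if (j : ℕ) + 1 = (i : ℕ) then 1 else 0)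

def runLengthTransition : Matrix (Fin (n + 1)) (Fin (n + 1)) K :=
  (1 / q) • runLengthMatrix q n

lemma runLengthMatrix_zero_apply (j : Fin (n + 1)) :
    runLengthMatrix q n 0 j = if j = Fin.last n then 0 else q - 1 := by
  have := j.is_le
  simp only [runLengthMatrix, Fin.val_zero, if_true, Fin.ext_iff, Fin.val_last]
  split_ifs <;> first | rfl | omega

lemma runLengthMatrix_succ_apply (i : Fin n) (j : Fin (n + 1)) :
    runLengthMatrix q n i.succ j = if j = i.castSucc then 1 else 0 := by
  simp [runLengthMatrix, Fin.ext_iff]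

lemma one_vecMul_runLengthMatrix :
    1 ᵥ* runLengthMatrix q n = fun j => if j = Fin.last n then 0 else q := by
  ext j
  induction j using Fin.lastCases <;>
    simp [vecMul, dotProduct, Fin.sum_univ_succ, runLengthMatrix_zero_apply,
      runLengthMatrix_succ_apply, eq_comm (a := Fin.last n), Fin.castSucc_ne_last]

variable {q n}

lemma one_vecMul_one_sub_runLengthTransition (hq : q ≠ 0) :
    1 ᵥ* (1 - runLengthTransition q n) = Pi.single (Fin.last n) 1 := by
  ext j
  rw [vecMul_sub, vecMul_one, runLengthTransition, vecMul_smul, one_vecMul_runLengthMatrix]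
  by_cases hj : j = Fin.last n
  · subst hj; simp
  · simp [hj, hq]

lemma one_sub_runLengthTransition_mulVec_succ (x : Fin (n + 1) → K) (i : Fin n) :
    ((1 - runLengthTransition q n) *ᵥ x) i.succ = x i.succ - x i.castSucc / q := by
  rw [sub_mulVec, one_mulVec, runLengthTransition, smul_mulVec]
  simp [mulVec, dotProduct, runLengthMatrix_succ_apply, div_eq_inv_mul]

lemma sum_one_sub_runLengthTransition_mulVec (hq : q ≠ 0) (x : Fin (n + 1) → K) :
    ∑ i, ((1 - runLengthTransition q n) *ᵥ x) i = x (Fin.last n) := by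
  rw [← one_dotProduct, dotProduct_mulVec, one_vecMul_one_sub_runLengthTransition hq,
    single_one_dotProduct]

lemma isUnit_det_one_sub_runLengthTransition (hq : q ≠ 0) :
    IsUnit (1 - runLengthTransition q n).det := by
  refine isUnit_iff_ne_zero.2 fun hdet => ?_
  obtain ⟨x, hx0, hx⟩ := exists_mulVec_eq_zero_iff.2 hdet
  refine hx0 (funext (Fin.reverseInduction ?_ fun i hi => ?_))
  · simpa [hx] using (sum_one_sub_runLengthTransition_mulVec hq x).symm
  · have hrec := one_sub_runLengthTransition_mulVec_succ (q := q) x i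
    rw [hx, hi] at hrec
    simpa [hq] using hrec

lemma one_sub_runLengthTransition_mulVec_pow (hq : q ≠ 0) :
    (1 - runLengthTransition q n) *ᵥ (fun i : Fin (n + 1) => q ^ (n - i : ℕ)) =
      Pi.single 0 1 := by
  have hsucc (i : Fin n) :
      ((1 - runLengthTransition q n) *ᵥ (fun i : Fin (n + 1) => q ^ (n - i : ℕ))) i.succ = 0 := by
    rw [one_sub_runLengthTransition_mulVec_succ]
    have : n - i = n - (i + 1) + 1 := by omega
    simp [this, pow_succ, hq]
  ext i
  induction i using Fin.cases with
  | zero =>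
    have hsum := sum_one_sub_runLengthTransition_mulVec hq (fun i : Fin (n + 1) => q ^ (n - i : ℕ))
    simpa [Fin.sum_univ_succ, hsucc] using hsum
  | succ i => simp [hsucc]

lemma runLengthTransition_mul_inv_mul_inv_last_zero (hq : q ≠ 0) (hq1 : q ≠ 1) :
    (runLengthTransition q n * (1 - runLengthTransition q n)⁻¹ * (1 - runLengthTransition q n)⁻¹)
      (Fin.last n) 0 = q * (q ^ n - 1) / (q - 1) := by
  set M := 1 - runLengthTransition q n
  have hM := isUnit_det_one_sub_runLengthTransition (n := n) hq
  have hrow (j : Fin (n + 1)) : M⁻¹ (Fin.last n) j = 1 := by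
    rw [← row_apply M⁻¹, ← single_one_vecMul, ← one_vecMul_one_sub_runLengthTransition hq,
      vecMul_vecMul, mul_nonsing_inv _ hM, vecMul_one, Pi.one_apply]
  have hcol (i : Fin (n + 1)) : M⁻¹ i 0 = q ^ (n - i : ℕ) := by
    rw [← col_apply M⁻¹, ← mulVec_single_one, ← one_sub_runLengthTransition_mulVec_pow hq,
      mulVec_mulVec, nonsing_inv_mul _ hM, one_mulVec]
  have hT : runLengthTransition q n * M⁻¹ = M⁻¹ - 1 := by
    rw [show runLengthTransition q n = 1 - M by simp [M], sub_mul, one_mul, mul_nonsing_inv _ hM]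
  rw [hT, sub_mul, one_mul, Matrix.sub_apply, mul_apply]
  simp only [hrow, hcol, one_mul]
  have hsum := sum_fin_pow_sub_one_sub q (n + 1)
  simp only [Nat.add_sub_cancel] at hsum
  rw [hsum, geom_sum_eq hq1]
  have hq1' : q - 1 ≠ 0 := sub_ne_zero.2 hq1
  field_simp
  ring

end RunLength

theorem stmt_15_general (m n : ℕ) (hm : 2 ≤ m)
    (A W : Matrix (Fin (n + 1)) (Fin (n + 1)) ℝ)
    (hA : ∀ i j : Fin (n + 1), A i j =
      if (i : ℕ) = 0 then (if (j : ℕ) < n then (m : ℝ) - 1 else 0)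
      else (if (j : ℕ) + 1 = (i : ℕ) then 1 else 0))
    (hW : W = (1 / (m : ℝ)) • A) :
    (W * (1 - W)⁻¹ * (1 - W)⁻¹) (Fin.last n) 0
      = (m : ℝ) * ((m : ℝ) ^ n - 1) / ((m : ℝ) - 1) := by
  obtain rfl : A = runLengthMatrix (m : ℝ) n := Matrix.ext hA
  obtain rfl : W = runLengthTransition (m : ℝ) n := hW
  exact runLengthTransition_mul_inv_mul_inv_last_zero (Nat.cast_ne_zero.2 (by omega))
    (Nat.cast_ne_one.2 (by omega))

/-- For integers `m ≥ 2`, `n ≥ 1`, with `A` the `(n+1)×(n+1)` real matrix whose first row is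
`(m-1, …, m-1, 0)` and whose row `i ≥ 1` has a single `1` in column `i-1`, and `W = (1/m)·A`,
the bottom-left entry of `W·((I − W)⁻¹)²` equals `m·(mⁿ − 1)/(m − 1)`. -/
theorem stmt_15 (m n : ℕ) (hm : 2 ≤ m) (hn : 1 ≤ n)
    (A W : Matrix (Fin (n + 1)) (Fin (n + 1)) ℝ)
    (hA : ∀ i j : Fin (n + 1), A i j =
      if (i : ℕ) = 0 then (if (j : ℕ) < n then (m : ℝ) - 1 else 0)
      else (if (j : ℕ) + 1 = (i : ℕ) then 1 else 0))
    (hW : W = (1 / (m : ℝ)) • A) :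
    (W * (1 - W)⁻¹ * (1 - W)⁻¹) (Fin.last n) 0
      = (m : ℝ) * ((m : ℝ) ^ n - 1) / ((m : ℝ) - 1) :=
  stmt_15_general m n hm A W hA hW
end
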